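/- Let L(t,x,p) = a(t)p² + b(t,x)p + c(t,x) with a(t) ≠ 0 for t ∈ [a,b], and let z(t,x̃) be a C² transformation. If the expression L(t, z(t,x̃), ∂z/∂t + (∂z/∂x̃)·p̃) - L(t, x̃, p̃) is linear (affine) in p̃ for all (t, x̃, p̃), then (∂z/∂x̃)² = 1, i.e., z(t,x̃) = ±x̃ + f(t) for some function f. -/

import Mathlib

/-! The `p̃²`-coefficient of the Lagrangian difference is `a(t) ((∂z/∂x̃)² - 1)`; affineness in `p̃`
and `a(t) ≠ 0` force `(∂z/∂x̃)² = 1`. Since `z` is `C¹`, `∂z/∂x̃` is continuous, so on the connected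
strip `[a,b] × ℝ` it is constantly `1` or constantly `-1`, and integrating in `x̃` gives
`z(t,x̃) = ±x̃ + z(t,0)`. -/

lemma sq_eq_one_of_quadratic_sub_quadratic_affine {α β₀ β₁ γ₀ γ₁ v w A B : ℝ} (hα : α ≠ 0)
    (h : ∀ p : ℝ, (α * (v + w * p) ^ 2 + β₁ * (v + w * p) + γ₁) - (α * p ^ 2 + β₀ * p + γ₀)
      = A + B * p) :
    w ^ 2 = 1 := by
  -- the second difference at `p = -1, 0, 1` kills the affine part and isolates the `p²`-coefficient
  have hcoeff : α * (w ^ 2 - 1) = 0 := by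
    linear_combination (h 1 + h (-1) - 2 * h 0) / 2
  have := (mul_eq_zero.mp hcoeff).resolve_left hα
  linarith

lemma continuous_of_hasDerivAt_snd {E : Type*} [NormedAddCommGroup E] [NormedSpace ℝ E]
    {n : WithTop ℕ∞} (hn : n ≠ 0) {Z Zx : ℝ → ℝ → E}
    (hZ : ContDiff ℝ n (fun q : ℝ × ℝ => Z q.1 q.2))
    (hZx : ∀ t x, HasDerivAt (Z t) (Zx t x) x) :
    Continuous (fun q : ℝ × ℝ => Zx q.1 q.2) := by
  have hfderiv : (fun q : ℝ × ℝ => Zx q.1 q.2)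
      = fun q => fderiv ℝ (fun q : ℝ × ℝ => Z q.1 q.2) q (0, 1) := by
    funext ⟨t, x⟩
    have hline : HasDerivAt (fun y : ℝ => ((t, y) : ℝ × ℝ)) (0, 1) x :=
      (hasDerivAt_const x t).prodMk (hasDerivAt_id x)
    exact (hZx t x).unique
      (((hZ.differentiable hn) (t, x)).hasFDerivAt.comp_hasDerivAt x hline)
  rw [hfderiv]
  exact (ContinuousLinearMap.apply ℝ E ((0 : ℝ), (1 : ℝ))).continuous.comp
    (hZ.continuous_fderiv hn)

lemma eq_mul_add_of_hasDerivAt_const {f : ℝ → ℝ} {c : ℝ} (hf : ∀ x, HasDerivAt f c x) (x : ℝ) :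
    f x = c * x + f 0 := by
  have hzero (y : ℝ) : HasDerivAt (fun y => f y - c * y) 0 y :=
    ((hf y).sub ((hasDerivAt_id' y).const_mul c)).congr_deriv (by ring)
  have := is_const_of_deriv_eq_zero (fun y => (hzero y).differentiableAt)
    (fun y => (hzero y).deriv) x 0
  simp only [mul_zero, sub_zero] at this
  linarith

theorem stmt10_general (a b : ℝ)
    (aco : ℝ → ℝ) (bco cco : ℝ → ℝ → ℝ)
    (ha : ∀ t ∈ Set.Icc a b, aco t ≠ 0)
    (L : ℝ → ℝ → ℝ → ℝ)
    (hL : ∀ t x p, L t x p = aco t * p ^ 2 + bco t x * p + cco t x)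
    (z zt zx : ℝ → ℝ → ℝ)
    (hz2 : ContDiff ℝ 2 (fun q : ℝ × ℝ => z q.1 q.2))
    (hzx : ∀ t x, HasDerivAt (fun y => z t y) (zx t x) x)
    (A B : ℝ → ℝ → ℝ)
    (hlin : ∀ t ∈ Set.Icc a b, ∀ x p : ℝ,
        L t (z t x) (zt t x + zx t x * p) - L t x p = A t x + B t x * p) :
    (∀ t ∈ Set.Icc a b, ∀ x : ℝ, (zx t x) ^ 2 = 1) ∧
      ∃ f : ℝ → ℝ,
        (∀ t ∈ Set.Icc a b, ∀ x : ℝ, z t x = x + f t) ∨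
        (∀ t ∈ Set.Icc a b, ∀ x : ℝ, z t x = -x + f t) := by
  have hsq : ∀ t ∈ Set.Icc a b, ∀ x : ℝ, (zx t x) ^ 2 = 1 := fun t ht x =>
    sq_eq_one_of_quadratic_sub_quadratic_affine (ha t ht) fun p => by
      simpa only [hL] using hlin t ht x p
  refine ⟨hsq, fun t => z t 0, ?_⟩
  have hsign := (isPreconnected_Icc.prod isPreconnected_univ).eq_one_or_eq_neg_one_of_sq_eq
    (continuous_of_hasDerivAt_snd two_ne_zero hz2 hzx).continuousOn
    (fun q hq => hsq q.1 hq.1 q.2)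
  rcases hsign with hpos | hneg
  · refine Or.inl fun t ht x => ?_
    have hderiv (y : ℝ) : HasDerivAt (z t) 1 y := by
      have hone : zx t y = 1 := hpos (x := (t, y)) ⟨ht, trivial⟩
      exact hone ▸ hzx t y
    simpa using eq_mul_add_of_hasDerivAt_const hderiv x
  · refine Or.inr fun t ht x => ?_
    have hderiv (y : ℝ) : HasDerivAt (z t) (-1) y := by
      have hneg_one : zx t y = -1 := hneg (x := (t, y)) ⟨ht, trivial⟩
      exact hneg_one ▸ hzx t y
    simpa using eq_mul_add_of_hasDerivAt_const hderiv x

/-- Leitmann's corollary: for `L(t,x,p) = a(t)p² + b(t,x)p + c(t,x)` with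
`a(t) ≠ 0`, if the Lagrangian difference under a C² transformation `x = z(t,x̃)`
is affine in `p̃`, then `(∂z/∂x̃)² = 1`, i.e. `z(t,x̃) = ±x̃ + f(t)`. -/
theorem stmt10 (a b : ℝ) (hab : a < b)
    (aco : ℝ → ℝ) (bco cco : ℝ → ℝ → ℝ)
    (ha : ∀ t ∈ Set.Icc a b, aco t ≠ 0)
    (L : ℝ → ℝ → ℝ → ℝ)
    (hL : ∀ t x p, L t x p = aco t * p ^ 2 + bco t x * p + cco t x)
    (z zt zx : ℝ → ℝ → ℝ)
    (hz2 : ContDiff ℝ 2 (fun q : ℝ × ℝ => z q.1 q.2))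
    (hzt : ∀ t x, HasDerivAt (fun τ => z τ x) (zt t x) t)
    (hzx : ∀ t x, HasDerivAt (fun y => z t y) (zx t x) x)
    (A B : ℝ → ℝ → ℝ)
    (hlin : ∀ t ∈ Set.Icc a b, ∀ x p : ℝ,
        L t (z t x) (zt t x + zx t x * p) - L t x p = A t x + B t x * p) :
    (∀ t ∈ Set.Icc a b, ∀ x : ℝ, (zx t x) ^ 2 = 1) ∧
      ∃ f : ℝ → ℝ,
        (∀ t ∈ Set.Icc a b, ∀ x : ℝ, z t x = x + f t) ∨
        (∀ t ∈ Set.Icc a b, ∀ x : ℝ, z t x = -x + f t) :=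
  stmt10_general a b aco bco cco ha L hL z zt zx hz2 hzx A B hlin
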